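/- arXiv:1405.6059 — 3 statements merged into one kernel-verified Lean document; each statement's English description precedes it below -/
import Mathlib

section
/- Let ε₁, ε₂ be real numbers with 0 < ε₁ < ε₂ and ε₁ε₂ = 1, and let Δ = {(x₁,x₂) ∈ ℝ² : x₁ > 0, x₂ > 0, and 1 ≤ x₂/x₁ < ε₂/ε₁}. Then for every X > 0 and every (x₁,x₂) ∈ Δ with x₁x₂ ≤ X, one has x₁ + x₂ ≤ (ε₁ + ε₂)·√X. -/
/-- Lemma 3.4 in coordinates: for `0 < ε₁ < ε₂` with `ε₁ε₂ = 1`, any point of the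
Shintani cone `Δ = {(x₁,x₂) : x₁,x₂ > 0, 1 ≤ x₂/x₁ < ε₂/ε₁}` of norm `x₁x₂ ≤ X`
has trace `x₁ + x₂ ≤ (ε₁+ε₂)√X`. -/
theorem trace_le_of_norm_le_in_shintani_cone
    (ε₁ ε₂ : ℝ) (hε₁ : 0 < ε₁) (hε : ε₁ < ε₂) (hεnorm : ε₁ * ε₂ = 1)
    (X : ℝ) (hX : 0 < X)
    (x₁ x₂ : ℝ) (hx₁ : 0 < x₁) (hx₂ : 0 < x₂)
    (hlo : 1 ≤ x₂ / x₁) (hhi : x₂ / x₁ < ε₂ / ε₁)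
    (hN : x₁ * x₂ ≤ X) :
    x₁ + x₂ ≤ (ε₁ + ε₂) * Real.sqrt X := by
  have hε₂ : 0 < ε₂ := hε₁.trans hε
  have h1 : x₁ ≤ x₂ := by
    have := (one_le_div hx₁).mp hlo
    linarith
  have h2 : x₂ * ε₁ < x₁ * ε₂ := by
    have := (div_lt_div_iff₀ hx₁ hε₁).mp hhi
    linarith
  have key : (x₁ + x₂) ^ 2 ≤ (ε₁ + ε₂) ^ 2 * X := by
    have hfac : 0 ≤ (ε₂ * x₁ - ε₁ * x₂) * (ε₂ * x₂ - ε₁ * x₁) := by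
      apply mul_nonneg <;> nlinarith
    nlinarith [mul_pos hx₁ hx₂, sq_nonneg (ε₁ + ε₂), mul_pos hε₁ hε₂]
  have hs : 0 ≤ (ε₁ + ε₂) * Real.sqrt X :=
    mul_nonneg (by linarith) (Real.sqrt_nonneg X)
  nlinarith [Real.sq_sqrt hX.le, Real.sqrt_nonneg X, key, sq_nonneg (x₁ + x₂ - (ε₁ + ε₂) * Real.sqrt X)]
end

section
/- Let ε₁, ε₂ be real numbers with 0 < ε₁ < 1 < ε₂ and ε₁ε₂ = 1, and let Δ = {(x₁,x₂) ∈ ℝ² : x₁ > 0, x₂ > 0, and 1 ≤ x₂/x₁ < ε₂/ε₁}. Then for every (x₁,x₂) ∈ ℝ² with x₁ > 0 and x₂ > 0 there exists a unique integer k such that (ε₁^k·x₁, ε₂^k·x₂) ∈ Δ. Equivalently, the positive quadrant ℝ²_{>0} is the disjoint union over k ∈ ℤ of the sets (ε₁^k, ε₂^k)·Δ (componentwise multiplication). -/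
/-- The Shintani fundamental domain in the real quadratic case: for
`0 < ε₁ < 1 < ε₂` with `ε₁ε₂ = 1`, every point of the positive quadrant has a unique
translate `(ε₁^k x₁, ε₂^k x₂)` (k ∈ ℤ) lying in the cone
`Δ = {(x₁,x₂) : x₁,x₂ > 0, 1 ≤ x₂/x₁ < ε₂/ε₁}`. -/
theorem shintani_fundamental_domain_quadratic
    (ε₁ ε₂ : ℝ) (hε₁0 : 0 < ε₁) (hε₁1 : ε₁ < 1) (hε₂ : 1 < ε₂) (hεnorm : ε₁ * ε₂ = 1)
    (x₁ x₂ : ℝ) (hx₁ : 0 < x₁) (hx₂ : 0 < x₂) :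
    ∃! k : ℤ,
      0 < ε₁ ^ k * x₁ ∧ 0 < ε₂ ^ k * x₂ ∧
      1 ≤ (ε₂ ^ k * x₂) / (ε₁ ^ k * x₁) ∧
      (ε₂ ^ k * x₂) / (ε₁ ^ k * x₁) < ε₂ / ε₁ := by
  set r : ℝ := ε₂ / ε₁ with hrdef
  set t : ℝ := x₂ / x₁ with htdef
  have hε₂0 : (0:ℝ) < ε₂ := lt_trans one_pos hε₂
  have hr1 : 1 < r := by
    rw [hrdef, lt_div_iff₀ hε₁0, one_mul]
    exact lt_trans hε₁1 hε₂
  have hr0 : (0:ℝ) < r := lt_trans one_pos hr1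
  have ht0 : (0:ℝ) < t := div_pos hx₂ hx₁
  have hlr : 0 < Real.log r := Real.log_pos hr1
  have key := existsUnique_add_zsmul_mem_Ico hlr (Real.log t) 0
  have equiv : ∀ k : ℤ,
      (0 < ε₁ ^ k * x₁ ∧ 0 < ε₂ ^ k * x₂ ∧
      1 ≤ (ε₂ ^ k * x₂) / (ε₁ ^ k * x₁) ∧
      (ε₂ ^ k * x₂) / (ε₁ ^ k * x₁) < ε₂ / ε₁) ↔
      (Real.log t + k • Real.log r ∈ Set.Ico (0:ℝ) (0 + Real.log r)) := by
    intro k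
    have hpos1 : 0 < ε₁ ^ k * x₁ := mul_pos (zpow_pos hε₁0 k) hx₁
    have hpos2 : 0 < ε₂ ^ k * x₂ := mul_pos (zpow_pos hε₂0 k) hx₂
    have hrk : (ε₂ ^ k * x₂) / (ε₁ ^ k * x₁) = r ^ k * t := by
      rw [hrdef, htdef, div_zpow]
      field_simp
    have hrt0 : 0 < r ^ k * t := mul_pos (zpow_pos hr0 k) ht0
    have hlog : Real.log (r ^ k * t) = Real.log t + k • Real.log r := by
      rw [Real.log_mul (ne_of_gt (zpow_pos hr0 k)) (ne_of_gt ht0), Real.log_zpow]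
      simp [zsmul_eq_mul]
      ring
    constructor
    · rintro ⟨-, -, h1, h2⟩
      rw [hrk] at h1 h2
      constructor
      · rw [← hlog]
        exact Real.log_nonneg h1
      · rw [zero_add, ← hlog]
        exact Real.log_lt_log hrt0 h2
    · rintro ⟨h1, h2⟩
      rw [← hlog] at h1
      rw [zero_add, ← hlog] at h2
      refine ⟨hpos1, hpos2, ?_, ?_⟩
      · rw [hrk]
        by_contra h
        push_neg at h
        exact absurd (Real.log_neg hrt0 h) (not_lt.2 h1)
      · rw [hrk]
        have := (Real.log_lt_log_iff hrt0 hr0).mp h2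
        exact this
  obtain ⟨k, hk, huniq⟩ := key
  exact ⟨k, (equiv k).mpr hk, fun m hm => huniq m ((equiv m).mp hm)⟩
end

section
/- Let n ≥ 1 and let v⁽¹⁾,…,v⁽ᵐ⁾ ∈ ℝⁿ be vectors with all coordinates positive. Set γ = max over 1 ≤ j ≤ m of (∑ᵢ v⁽ʲ⁾ᵢ)/(∏ᵢ v⁽ʲ⁾ᵢ)^{1/n}. Then for every x = ∑ⱼ λⱼ v⁽ʲ⁾ with all λⱼ ≥ 0 and not all λⱼ zero, one has ∑ᵢ xᵢ ≤ γ·(∏ᵢ xᵢ)^{1/n}. -/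
open Finset Real

/-- Superadditivity of the geometric mean: if `x i = ∑ j, w j i` with all `w j i ≥ 0`
and all `x i > 0`, then `∑ j (∏ i, w j i)^(1/n) ≤ (∏ i, x i)^(1/n)`. -/
lemma sum_prod_rpow_le (n m : ℕ) (hn : 1 ≤ n) (w : Fin m → Fin n → ℝ)
    (hw : ∀ j i, 0 ≤ w j i) (x : Fin n → ℝ) (hx : ∀ i, 0 < x i)
    (hxw : ∀ i, x i = ∑ j, w j i) :
    ∑ j, (∏ i, w j i) ^ ((n : ℝ)⁻¹) ≤ (∏ i, x i) ^ ((n : ℝ)⁻¹) := by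
  have hnpos : (0 : ℝ) < n := by exact_mod_cast hn
  set P : ℝ := (∏ i, x i) ^ ((n : ℝ)⁻¹) with hP
  have hPpos : 0 < P := Real.rpow_pos_of_pos (Finset.prod_pos fun i _ => hx i) _
  have key : ∀ j : Fin m, (∏ i, w j i) ^ ((n : ℝ)⁻¹) ≤ P * ∑ i, (n : ℝ)⁻¹ * (w j i / x i) := by
    intro j
    have hq : ∀ i, 0 ≤ w j i / x i := fun i => div_nonneg (hw j i) (hx i).le
    have hAMGM := Real.geom_mean_le_arith_mean_weighted Finset.univ
      (fun _ : Fin n => (n : ℝ)⁻¹) (fun i => w j i / x i)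
      (fun i _ => by positivity)
      (by simp [Finset.card_univ]; field_simp)
      (fun i _ => hq i)
    have hprod : ∏ i, (w j i / x i) ^ ((n : ℝ)⁻¹)
        = (∏ i, w j i) ^ ((n : ℝ)⁻¹) / P := by
      rw [hP, ← Real.finset_prod_rpow _ _ (fun i _ => hw j i) _,
        ← Real.finset_prod_rpow _ _ (fun i _ => (hx i).le) _,
        ← Finset.prod_div_distrib]
      refine Finset.prod_congr rfl fun i _ => ?_
      rw [Real.div_rpow (hw j i) (hx i).le]
    rw [hprod] at hAMGM
    calc (∏ i, w j i) ^ ((n : ℝ)⁻¹) = (∏ i, w j i) ^ ((n : ℝ)⁻¹) / P * P := by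
          field_simp
      _ ≤ (∑ i, (n : ℝ)⁻¹ * (w j i / x i)) * P := by
          apply mul_le_mul_of_nonneg_right _ hPpos.le
          simpa using hAMGM
      _ = P * ∑ i, (n : ℝ)⁻¹ * (w j i / x i) := by ring
  calc ∑ j, (∏ i, w j i) ^ ((n : ℝ)⁻¹)
      ≤ ∑ j, P * ∑ i, (n : ℝ)⁻¹ * (w j i / x i) := Finset.sum_le_sum fun j _ => key j
    _ = P * ((n : ℝ)⁻¹ * ∑ i, (∑ j, w j i) / x i) := by
        rw [← Finset.mul_sum]
        congr 1
        rw [Finset.sum_comm]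
        simp [Finset.mul_sum, Finset.sum_div]
    _ = P := by
        have : ∑ i : Fin n, (∑ j, w j i) / x i = n := by
          rw [show (n : ℝ) = ∑ _i : Fin n, (1 : ℝ) by simp]
          refine Finset.sum_congr rfl fun i _ => ?_
          rw [← hxw i, div_self (hx i).ne']
        rw [this, inv_mul_cancel₀ hnpos.ne', mul_one]

/-- Remark 3.6 in coordinates: on a cone in `ℝⁿ_{>0}` spanned by rays `v 0, …, v (m-1)`,
with `γ` the maximum of the normalized traces `(∑ᵢ vⱼᵢ)/(∏ᵢ vⱼᵢ)^(1/n)` of the rays,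
every nonzero nonnegative combination `x = ∑ⱼ λⱼ vⱼ` satisfies
`∑ᵢ xᵢ ≤ γ (∏ᵢ xᵢ)^(1/n)`. -/
theorem trace_le_gamma_mul_norm_rpow
    (n m : ℕ) (hn : 1 ≤ n) (hm : (Finset.univ : Finset (Fin m)).Nonempty)
    (v : Fin m → Fin n → ℝ) (hv : ∀ j i, 0 < v j i)
    (γ : ℝ)
    (hγ : γ = Finset.univ.sup' hm fun j => (∑ i, v j i) / (∏ i, v j i) ^ ((n : ℝ)⁻¹))
    (lam : Fin m → ℝ) (hlam : ∀ j, 0 ≤ lam j) (hlam0 : ∃ j, lam j ≠ 0)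
    (x : Fin n → ℝ) (hx : x = ∑ j, lam j • v j) :
    ∑ i, x i ≤ γ * (∏ i, x i) ^ ((n : ℝ)⁻¹) := by
  obtain ⟨j₀, hj₀⟩ := hlam0
  have hj₀pos : 0 < lam j₀ := (hlam j₀).lt_of_ne' hj₀
  -- coordinates of x
  have hxi : ∀ i, x i = ∑ j, lam j * v j i := by
    intro i; rw [hx]; simp [Finset.sum_apply]
  have hxpos : ∀ i, 0 < x i := by
    intro i
    rw [hxi i]
    refine Finset.sum_pos' (fun j _ => mul_nonneg (hlam j) (hv j i).le) ⟨j₀, by simp,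
      mul_pos hj₀pos (hv j₀ i)⟩
  -- γ bounds each normalized trace
  have hγj : ∀ j, (∑ i, v j i) / (∏ i, v j i) ^ ((n : ℝ)⁻¹) ≤ γ := by
    intro j; rw [hγ]
    exact Finset.le_sup' (fun j => (∑ i, v j i) / (∏ i, v j i) ^ ((n : ℝ)⁻¹))
      (Finset.mem_univ j)
  have hγ0 : 0 ≤ γ := by
    refine le_trans ?_ (hγj j₀)
    exact div_nonneg (Finset.sum_nonneg fun i _ => (hv j₀ i).le)
      (Real.rpow_nonneg (Finset.prod_nonneg fun i _ => (hv j₀ i).le) _)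
  -- per-ray estimate
  have hray : ∀ j : Fin m, lam j * ∑ i, v j i ≤ γ * (∏ i, (lam j * v j i)) ^ ((n : ℝ)⁻¹) := by
    intro j
    have hPj : (0:ℝ) < (∏ i, v j i) ^ ((n : ℝ)⁻¹) :=
      Real.rpow_pos_of_pos (Finset.prod_pos fun i _ => hv j i) _
    have h1 : ∑ i, v j i ≤ γ * (∏ i, v j i) ^ ((n : ℝ)⁻¹) :=
      (div_le_iff₀ hPj).mp (hγj j)
    have h2 : (∏ i, (lam j * v j i)) ^ ((n : ℝ)⁻¹)
        = lam j * (∏ i, v j i) ^ ((n : ℝ)⁻¹) := by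
      rw [Finset.prod_mul_distrib, Finset.prod_const, Finset.card_univ, Fintype.card_fin,
        Real.mul_rpow (pow_nonneg (hlam j) n) (Finset.prod_nonneg fun i _ => (hv j i).le),
        ← Real.rpow_natCast (lam j) n, ← Real.rpow_mul (hlam j)]
      have hn0 : (n : ℝ) ≠ 0 := by positivity
      rw [mul_inv_cancel₀ hn0, Real.rpow_one]
    rw [h2]
    calc lam j * ∑ i, v j i ≤ lam j * (γ * (∏ i, v j i) ^ ((n : ℝ)⁻¹)) :=
          mul_le_mul_of_nonneg_left h1 (hlam j)
      _ = γ * (lam j * (∏ i, v j i) ^ ((n : ℝ)⁻¹)) := by ring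
  -- superadditivity
  have hsup := sum_prod_rpow_le n m hn (fun j i => lam j * v j i)
    (fun j i => mul_nonneg (hlam j) (hv j i).le) x hxpos hxi
  calc ∑ i, x i = ∑ j, lam j * ∑ i, v j i := by
        simp only [hxi, Finset.mul_sum]
        rw [Finset.sum_comm]
    _ ≤ ∑ j, γ * (∏ i, (lam j * v j i)) ^ ((n : ℝ)⁻¹) :=
        Finset.sum_le_sum fun j _ => hray j
    _ = γ * ∑ j, (∏ i, (lam j * v j i)) ^ ((n : ℝ)⁻¹) := by rw [Finset.mul_sum]
    _ ≤ γ * (∏ i, x i) ^ ((n : ℝ)⁻¹) := mul_le_mul_of_nonneg_left hsup hγ0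
end
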